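/- The degree of the Lefschetz character of the Rudvalis group, 10113024, equals 2^12 · 2469, while |Ru|_2 = 2^14; hence the Lefschetz module of Ru is not projective mod 2. -/

import Mathlib

/-!
Let `P` be a subgroup of order `2^m` of `G` and write `σ_P = ∑ h ∈ P, h ∈ k[G]`, `char k = 2`.
If `H < K` has index two and `g ∈ K \ H`, then `σ_K = (1 + g) σ_H = σ_H (1 + g)` and
`(1 + g) σ_K = 0`, so `1 + g` is an endomorphism of `σ_H M` squaring to zero with image `σ_K M`;
hence `2 dim σ_K M ≤ dim σ_H M`. Along a chain `1 < P₁ < ⋯ < P` this gives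
`2^m dim σ_P M ≤ dim M` for every finite-dimensional `k[G]`-module `M`, whereas a free module
`k[G]^n` attains equality. A projective `M` is a direct summand `k[G]^n ≅ N × M`, so both summands
attain equality as well and `2^m ∣ dim M`.
-/

open Module LinearMap

theorem Submodule.finrank_prod {K V W : Type*} [DivisionRing K] [AddCommGroup V] [Module K V]
    [AddCommGroup W] [Module K W] (p : Submodule K V) (q : Submodule K W)
    [FiniteDimensional K p] [FiniteDimensional K q] :
    finrank K (p.prod q) = finrank K p + finrank K q := by
  have hrange : range (p.subtype.prodMap q.subtype) = p.prod q := by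
    rw [range_prodMap, range_subtype, range_subtype]
  rw [← hrange, finrank_range_of_inj (p.injective_subtype.prodMap q.injective_subtype),
    Module.finrank_prod]

theorem LinearMap.two_mul_finrank_map_le {K V : Type*} [DivisionRing K] [AddCommGroup V]
    [Module K V] (u : V →ₗ[K] V) (W : Submodule K V) [FiniteDimensional K W]
    (h : W.map u ≤ W ⊓ ker u) : 2 * finrank K (W.map u) ≤ finrank K W := by
  have hker : W.map u ≤ (ker (u.domRestrict W)).map W.subtype := by
    rwa [ker_domRestrict, Submodule.map_comap_subtype]
  have hrank := finrank_range_add_finrank_ker (u.domRestrict W)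
  rw [range_domRestrict] at hrank
  have hle := Submodule.finrank_mono hker
  rw [Submodule.finrank_map_subtype_eq] at hle
  omega

namespace Subgroup

variable {G : Type*} [Group G] {H K : Subgroup G} {g b : G}

theorem inv_mul_mem_iff_of_relIndex_eq_two (h2 : H.relIndex K = 2) (hg : g ∈ K) (hgH : g ∉ H)
    (hb : b ∈ K) : g⁻¹ * b ∈ H ↔ b ∉ H := by
  simpa [mem_subgroupOf, hgH] using
    mul_mem_iff_of_index_two (H := H.subgroupOf K) h2 (a := ⟨g⁻¹, K.inv_mem hg⟩) (b := ⟨b, hb⟩)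

theorem mul_inv_mem_iff_of_relIndex_eq_two (h2 : H.relIndex K = 2) (hg : g ∈ K) (hgH : g ∉ H)
    (hb : b ∈ K) : b * g⁻¹ ∈ H ↔ b ∉ H := by
  simpa [mem_subgroupOf, hgH] using
    mul_mem_iff_of_index_two (H := H.subgroupOf K) h2 (a := ⟨b, hb⟩) (b := ⟨g⁻¹, K.inv_mem hg⟩)

end Subgroup

namespace MonoidAlgebra

variable {k G : Type*} [Group G] [Finite G]

section Semiring

variable [Semiring k]

/-- The sum `∑ h ∈ H, h`, encoded by its coefficient function, the indicator of `H`. -/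
noncomputable def subgroupSum (k : Type*) [Semiring k] (H : Subgroup G) : MonoidAlgebra k G :=
  ofCoeff (Finsupp.ofSupportFinite ((H : Set G).indicator 1) (Set.toFinite _))

theorem coeff_subgroupSum (H : Subgroup G) (b : G) :
    (subgroupSum k H).coeff b = (H : Set G).indicator 1 b := rfl

theorem coeff_of_mul_subgroupSum (H : Subgroup G) (g b : G) :
    (of k G g * subgroupSum k H).coeff b = (H : Set G).indicator 1 (g⁻¹ * b) := by
  simp [coeff_subgroupSum]

theorem coeff_subgroupSum_mul_of (H : Subgroup G) (g b : G) :
    (subgroupSum k H * of k G g).coeff b = (H : Set G).indicator 1 (b * g⁻¹) := by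
  simp [coeff_subgroupSum]

variable {H K : Subgroup G} {g : G}

theorem subgroupSum_eq_one_add_of_mul (hHK : H ≤ K) (h2 : H.relIndex K = 2) (hg : g ∈ K)
    (hgH : g ∉ H) : subgroupSum k K = (1 + of k G g) * subgroupSum k H := by
  ext b
  rw [add_mul, one_mul, coeff_add, Finsupp.add_apply, coeff_of_mul_subgroupSum,
    coeff_subgroupSum, coeff_subgroupSum]
  by_cases hb : b ∈ K
  · have := Subgroup.inv_mul_mem_iff_of_relIndex_eq_two h2 hg hgH hb
    by_cases hbH : b ∈ H <;> simp_all
  · have hbH : b ∉ H := fun h ↦ hb (hHK h)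
    have hgbH : g⁻¹ * b ∉ H := fun h ↦ hb (by simpa using K.mul_mem hg (hHK h))
    simp_all

theorem subgroupSum_eq_mul_one_add_of (hHK : H ≤ K) (h2 : H.relIndex K = 2) (hg : g ∈ K)
    (hgH : g ∉ H) : subgroupSum k K = subgroupSum k H * (1 + of k G g) := by
  ext b
  rw [mul_add, mul_one, coeff_add, Finsupp.add_apply, coeff_subgroupSum_mul_of,
    coeff_subgroupSum, coeff_subgroupSum]
  by_cases hb : b ∈ K
  · have := Subgroup.mul_inv_mem_iff_of_relIndex_eq_two h2 hg hgH hb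
    by_cases hbH : b ∈ H <;> simp_all
  · have hbH : b ∉ H := fun h ↦ hb (hHK h)
    have hbgH : b * g⁻¹ ∉ H := fun h ↦ hb (by simpa using K.mul_mem (hHK h) hg)
    simp_all

theorem one_add_of_mul_subgroupSum [CharP k 2] (hg : g ∈ K) :
    (1 + of k G g) * subgroupSum k K = 0 := by
  ext b
  rw [add_mul, one_mul, coeff_add, Finsupp.add_apply, coeff_of_mul_subgroupSum,
    coeff_subgroupSum]
  have hshift : g⁻¹ * b ∈ K ↔ b ∈ K := K.mul_mem_cancel_left (K.inv_mem hg)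
  by_cases hb : b ∈ K <;> simp [hb, hshift, CharTwo.add_self_eq_zero]

end Semiring

section Module

variable [Field k] {M N : Type*} [AddCommGroup M] [Module k M] [Module (MonoidAlgebra k G) M]
  [IsScalarTower k (MonoidAlgebra k G) M]
  [AddCommGroup N] [Module k N] [Module (MonoidAlgebra k G) N]
  [IsScalarTower k (MonoidAlgebra k G) N]

noncomputable def subgroupSumRank (k : Type*) [Field k] (H : Subgroup G) (M : Type*)
    [AddCommGroup M] [Module k M] [Module (MonoidAlgebra k G) M]
    [IsScalarTower k (MonoidAlgebra k G) M] : ℕ :=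
  finrank k (range (toModuleEnd k M (subgroupSum k H)))

theorem subgroupSumRank_congr (e : M ≃ₗ[MonoidAlgebra k G] N) (H : Subgroup G) :
    subgroupSumRank k H M = subgroupSumRank k H N := by
  set e' := e.restrictScalars k
  have hcomm : toModuleEnd k N (subgroupSum k H) ∘ₗ e'.toLinearMap =
      e'.toLinearMap ∘ₗ toModuleEnd k M (subgroupSum k H) := by
    ext x; simp [e']
  unfold subgroupSumRank
  rw [← range_comp_of_range_eq_top _ e'.range, hcomm, range_comp, e'.finrank_map_eq]

variable (M N) in
theorem subgroupSumRank_prod [Module.Finite k M] [Module.Finite k N] (H : Subgroup G) :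
    subgroupSumRank k H (M × N) = subgroupSumRank k H M + subgroupSumRank k H N := by
  have hprod : toModuleEnd k (M × N) (subgroupSum k H) =
      (toModuleEnd k M (subgroupSum k H)).prodMap (toModuleEnd k N (subgroupSum k H)) := by
    ext x <;> simp
  rw [subgroupSumRank, hprod, range_prodMap, Submodule.finrank_prod]
  rfl

theorem two_mul_subgroupSumRank_le [CharP k 2] [Module.Finite k M] {H K : Subgroup G}
    (hHK : H ≤ K) (h2 : H.relIndex K = 2) :
    2 * subgroupSumRank k K M ≤ subgroupSumRank k H M := by
  obtain ⟨g, hg, hgH⟩ : ∃ g ∈ K, g ∉ H :=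
    SetLike.not_le_iff_exists.mp fun h ↦ by simp [Subgroup.relIndex_eq_one.mpr h] at h2
  set act : MonoidAlgebra k G →+* Module.End k M := toModuleEnd k M
  set u := act (1 + of k G g)
  have himage : range (act (subgroupSum k K)) = (range (act (subgroupSum k H))).map u := by
    rw [subgroupSum_eq_one_add_of_mul hHK h2 hg hgH, map_mul, Module.End.mul_eq_comp, range_comp]
  have hnilp : (range (act (subgroupSum k H))).map u ≤ range (act (subgroupSum k H)) ⊓ ker u := by
    rw [← himage]
    refine le_inf ?_ ?_
    · rw [subgroupSum_eq_mul_one_add_of hHK h2 hg hgH, map_mul, Module.End.mul_eq_comp]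
      exact range_comp_le_range _ _
    · rintro _ ⟨x, rfl⟩
      rw [mem_ker, ← Module.End.mul_apply, ← map_mul, one_add_of_mul_subgroupSum hg, map_zero,
        LinearMap.zero_apply]
  rw [subgroupSumRank, subgroupSumRank, himage]
  exact two_mul_finrank_map_le u _ hnilp

theorem two_pow_mul_subgroupSumRank_le [CharP k 2] [Module.Finite k M] (m : ℕ) {P : Subgroup G}
    (hP : Nat.card P = 2 ^ m) : 2 ^ m * subgroupSumRank k P M ≤ finrank k M := by
  induction m generalizing P with
  | zero => simpa [subgroupSumRank] using finrank_range_le _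
  | succ m ih =>
    have : Fact (Nat.Prime 2) := ⟨Nat.prime_two⟩
    obtain ⟨H, hH⟩ := Sylow.exists_subgroup_card_pow_prime 2 (n := m) (G := P)
      (hP ▸ pow_dvd_pow 2 m.le_succ)
    have hHcard : Nat.card (H.map P.subtype) = 2 ^ m := by
      rw [Subgroup.card_map_of_injective P.subtype_injective, hH]
    have h2 : (H.map P.subtype).relIndex P = 2 := by
      have := Subgroup.relIndex_mul_relIndex ⊥ _ P bot_le (Subgroup.map_subtype_le H)
      rw [Subgroup.relIndex_bot_left, Subgroup.relIndex_bot_left, hHcard, hP, pow_succ] at this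
      exact Nat.eq_of_mul_eq_mul_left (by positivity) this
    calc 2 ^ (m + 1) * subgroupSumRank k P M
        = 2 ^ m * (2 * subgroupSumRank k P M) := by ring
      _ ≤ 2 ^ m * subgroupSumRank k (H.map P.subtype) M :=
        Nat.mul_le_mul_left _ (two_mul_subgroupSumRank_le (Subgroup.map_subtype_le H) h2)
      _ ≤ finrank k M := ih hHcard

theorem coeff_subgroupSum_mul_sum_smul_of_out (P : Subgroup G)
    [Fintype (Quotient (QuotientGroup.rightRel P))]
    (c : Quotient (QuotientGroup.rightRel P) → k) (j : Quotient (QuotientGroup.rightRel P)) :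
    (subgroupSum k P * ∑ i, c i • of k G i.out).coeff j.out = c j := by
  have hrep (i : Quotient (QuotientGroup.rightRel P)) :
      j.out * i.out⁻¹ ∈ (P : Set G) ↔ i = j :=
    QuotientGroup.rightRel_apply.symm.trans Quotient.out_equiv_out
  simp only [Finset.mul_sum, coeff_sum, Finset.sum_apply', mul_smul_comm, of_apply, coeff_smul,
    Finsupp.smul_apply, coeff_mul_single_apply, coeff_subgroupSum]
  rw [Finset.sum_eq_single j
      (fun i _ hij ↦ by rw [Set.indicator_of_notMem (mt (hrep i).mp hij)]; simp) (by simp),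
    Set.indicator_of_mem ((hrep j).mpr rfl)]
  simp

theorem card_mul_card_le_card_mul_subgroupSumRank_pi (ι : Type*) [Fintype ι] (P : Subgroup G) :
    Fintype.card ι * Nat.card G ≤ Nat.card P * subgroupSumRank k P (ι → MonoidAlgebra k G) := by
  set J := Quotient (QuotientGroup.rightRel P)
  have : Fintype J := Fintype.ofFinite J
  have hcard : Nat.card G = Fintype.card J * Nat.card P := by
    rw [← P.card_mul_index, P.index_eq_card, ← Nat.card_eq_fintype_card,
      Nat.card_congr (QuotientGroup.quotientRightRelEquivQuotientLeftRel P), mul_comm]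
  set W := range (toModuleEnd k (ι → MonoidAlgebra k G) (subgroupSum k P))
  let coeffsAtRep : (ι → MonoidAlgebra k G) →ₗ[k] (ι × J → k) :=
    { toFun x p := (x p.1).coeff p.2.out
      map_add' _ _ := rfl
      map_smul' _ _ := rfl }
  have hsurj : range (coeffsAtRep.domRestrict W) = ⊤ := by
    refine range_eq_top.mpr fun c ↦ ⟨⟨_, fun i ↦ ∑ j, c (i, j) • of k G j.out, rfl⟩, ?_⟩
    exact funext fun p ↦ coeff_subgroupSum_mul_sum_smul_of_out P (fun j ↦ c (p.1, j)) p.2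
  have hle := finrank_range_le (coeffsAtRep.domRestrict W)
  rw [hsurj, finrank_top, Module.finrank_fintype_fun_eq_card, Fintype.card_prod] at hle
  rw [hcard]
  calc Fintype.card ι * (Fintype.card J * Nat.card P)
      = Nat.card P * (Fintype.card ι * Fintype.card J) := by ring
    _ ≤ Nat.card P * finrank k W := Nat.mul_le_mul_left _ hle

end Module

theorem two_pow_dvd_finrank_of_projective [Field k] [CharP k 2] {m : ℕ} (hm : 2 ^ m ∣ Nat.card G)
    (M : Type*) [AddCommGroup M] [Module k M] [Module (MonoidAlgebra k G) M]
    [IsScalarTower k (MonoidAlgebra k G) M] [Module.Finite k M]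
    [Projective (MonoidAlgebra k G) M] : 2 ^ m ∣ finrank k M := by
  have : Fact (Nat.Prime 2) := ⟨Nat.prime_two⟩
  obtain ⟨P, hP⟩ := Sylow.exists_subgroup_card_pow_prime 2 hm
  have := Module.Finite.of_restrictScalars_finite k (MonoidAlgebra k G) M
  obtain ⟨n, f, s, -, -, hfs⟩ :=
    Module.Finite.exists_comp_eq_id_of_projective (MonoidAlgebra k G) M
  let e := ((exact_subtype_ker_map f).splitSurjectiveEquiv (ker f).injective_subtype ⟨s, hfs⟩).1
  have : Module.Finite k (ker f) :=
    .of_injective ((ker f).subtype.restrictScalars k) (ker f).injective_subtype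
  have hfree := card_mul_card_le_card_mul_subgroupSumRank_pi (k := k) (Fin n) P
  rw [subgroupSumRank_congr e, subgroupSumRank_prod, hP, Fintype.card_fin] at hfree
  have hdim : n * Nat.card G = finrank k (ker f) + finrank k M := by
    rw [← Module.finrank_prod, ← (e.restrictScalars k).finrank_eq, Module.finrank_pi_fintype,
      Finset.sum_const, Finset.card_univ, Fintype.card_fin, smul_eq_mul,
      Module.finrank_eq_nat_card_basis (MonoidAlgebra.basis G k)]
  have hK := two_pow_mul_subgroupSumRank_le (k := k) (M := ker f) m hP
  have hM := two_pow_mul_subgroupSumRank_le (k := k) (M := M) m hP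
  exact ⟨subgroupSumRank k P M, by linarith⟩

end MonoidAlgebra

/-- The degree of the Lefschetz character of the Rudvalis group, `10113024`, equals
`2^12 · 2469`, while `|Ru|_2 = 2^14`; hence the Lefschetz module of `Ru` is not
projective mod 2 (by the `p`-test). -/
theorem ru_lefschetz_not_projective :
    ((10113024 : ℕ) = 2 ^ 12 * 2469 ∧ ¬ ((2:ℕ) ^ 14 ∣ 10113024)) ∧
    (∀ (k : Type) [Field k] [CharP k 2] (G : Type) [Group G] [Fintype G],
      (2 : ℕ) ^ 14 ∣ Fintype.card G →
      ∀ (M : Type) [AddCommGroup M] [Module k M] [Module (MonoidAlgebra k G) M]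
        [IsScalarTower k (MonoidAlgebra k G) M] [Module.Finite k M],
      Module.finrank k M = 10113024 →
      ¬ Module.Projective (MonoidAlgebra k G) M) := by
  refine ⟨⟨by norm_num, by norm_num⟩, ?_⟩
  intro k _ _ G _ _ hdvd M _ _ _ _ _ hrank hproj
  have hdiv := MonoidAlgebra.two_pow_dvd_finrank_of_projective (k := k)
    (Nat.card_eq_fintype_card (α := G) ▸ hdvd) M
  rw [hrank] at hdiv
  norm_num at hdiv
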